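/- Let G = ([n], E) be a DAG with weights w ∈ ℝ^E and weight matrix C, and let j→i be an edge of the transitive closure G*. Then the inequality x_i − x_j ≤ c*_ij is non-redundant in the description of Q(C) — i.e., the polyhedron defined by all the inequalities x_k − x_l ≤ c*_kl for edges l→k of G* other than j→i strictly contains Q(C) — if and only if j→i ∈ G^♭_w. Equivalently, the hyperplane {x : x_i − x_j = c*_ij} supports a facet of the polyhedron Q(C) ⊆ ℝ^n/ℝ𝟙 exactly when j→i belongs to the weighted transitive reduction. -/

import Mathlib

/-! Call `u ∉ {i, j}` a detour if `c*_iu + c*_uj ≤ c_ij`. In a DAG, a path `j → ⋯ → i` other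
than the edge runs through such a `u`, so `j → i ∈ G^♭_w` exactly when the edge exists and has
no detour. A detour makes `x_i − x_j ≤ c_ij` follow from the two retained inequalities
`x_i − x_u ≤ c*_iu` and `x_u − x_j ≤ c*_uj`. Conversely, without a detour, replace `c*_ij` by
`min_{u ∉ {i, j}} (c*_iu + c*_uj) > c_ij`; the columns of the resulting matrix still satisfy the
retained inequalities, hence so does their tropical combination `x = min_u (λ_u + column u)`,
and for `λ_j = 0` and `λ_u` large otherwise this point has `x_i − x_j > c_ij`. -/

open scoped Classical
noncomputable section

/-- The min-plus tropical semiring `T = ℝ ∪ {∞}` with `⊕ = min` and `⊙ = +`. -/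
abbrev Trop : Type := WithTop ℝ

/-- Min-plus identity matrix: `0` on the diagonal, `∞` off the diagonal. -/
def mpId {n : ℕ} : Matrix (Fin n) (Fin n) Trop := fun i j => if i = j then 0 else ⊤

/-- Min-plus matrix product. -/
def mpMul {n : ℕ} (A B : Matrix (Fin n) (Fin n) Trop) : Matrix (Fin n) (Fin n) Trop :=
  fun i j => Finset.univ.inf fun k => A i k + B k j

/-- Entrywise minimum (tropical sum) of matrices. -/
def mpAdd {n : ℕ} (A B : Matrix (Fin n) (Fin n) Trop) : Matrix (Fin n) (Fin n) Trop :=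
  fun i j => A i j ⊓ B i j

/-- Min-plus matrix power. -/
def mpPow {n : ℕ} (A : Matrix (Fin n) (Fin n) Trop) : ℕ → Matrix (Fin n) (Fin n) Trop
  | 0 => mpId
  | k + 1 => mpMul (mpPow A k) A

/-- Kleene star `A* = I ⊕ A ⊕ A^{⊙2} ⊕ ⋯ ⊕ A^{⊙(n−1)}`. -/
def kleene {n : ℕ} (A : Matrix (Fin n) (Fin n) Trop) : Matrix (Fin n) (Fin n) Trop :=
  fun i j => (Finset.range n).inf fun k => mpPow A k i j

/-- `p` is a directed path from `j` to `i` in the digraph with edge relation `E`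
(`E a b` meaning there is an edge `a → b`), recorded as its list of vertices. -/
def IsPathFrom {n : ℕ} (E : Fin n → Fin n → Prop) (j i : Fin n) (p : List (Fin n)) : Prop :=
  p.head? = some j ∧ p.getLast? = some i ∧ p.Chain' E

/-- A digraph is acyclic if the only paths from a vertex to itself are trivial. -/
def IsDAG {n : ℕ} (E : Fin n → Fin n → Prop) : Prop :=
  ∀ (j : Fin n) (p : List (Fin n)), IsPathFrom E j j p → p.length ≤ 1

/-- `C ∈ T^{n×n}` is supported on the digraph `E` : zero diagonal, and for `i ≠ j`
the entry `c_ij` is finite exactly when `j → i` is an edge. -/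
def SupportedOn {n : ℕ} (C : Matrix (Fin n) (Fin n) Trop) (E : Fin n → Fin n → Prop) : Prop :=
  (∀ i, C i i = 0) ∧ ∀ i j, i ≠ j → (C i j ≠ ⊤ ↔ E j i)

/-- The edge weight function of a weight matrix: `cw C a b = c_{ba}` is the weight of
the edge `a → b`. -/
def cw {n : ℕ} (C : Matrix (Fin n) (Fin n) Trop) : Fin n → Fin n → ℝ :=
  fun a b => WithTop.untopD 0 (C b a)

/-- Total weight of a path (sum of the weights of its consecutive edges). -/
def pathWeight {n : ℕ} (w : Fin n → Fin n → ℝ) (p : List (Fin n)) : ℝ :=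
  ((p.zip p.tail).map fun q => w q.1 q.2).sum

/-- The edge `j → i` belongs to the weighted transitive reduction `G^♭_w`:
the single edge is the unique minimum-weight directed path from `j` to `i`. -/
def InWTR {n : ℕ} (E : Fin n → Fin n → Prop) (w : Fin n → Fin n → ℝ) (j i : Fin n) : Prop :=
  E j i ∧ ∀ p : List (Fin n), IsPathFrom E j i p → p ≠ [j, i] → w j i < pathWeight w p

/-- Weighted digraph polyhedron `Q(C) = {x : x_i − x_j ≤ c_ij}` (as the saturated
subset of `ℝ^n` representing a subset of `ℝ^n/ℝ𝟙`). -/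
def wdp {n : ℕ} (C : Matrix (Fin n) (Fin n) Trop) : Set (Fin n → ℝ) :=
  {x | ∀ i j, i ≠ j → ((x i - x j : ℝ) : Trop) ≤ C i j}

/-- The tropical polyhedron generated by the columns of `V`: all min-plus linear
combinations `V ⊙ λ`, `λ ∈ ℝ^n` (as a saturated subset of `ℝ^d`). -/
def tconvM {d n : ℕ} (V : Matrix (Fin d) (Fin n) Trop) : Set (Fin d → ℝ) :=
  {x | ∃ lam : Fin n → ℝ, ∀ i, (x i : Trop) = Finset.univ.inf fun j => V i j + (lam j : Trop)}

/-- `v` is reachable from `s`. -/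
def Reaches {n : ℕ} (E : Fin n → Fin n → Prop) (s v : Fin n) : Prop :=
  ∃ p, IsPathFrom E s v p

/-- Edges of the transitive closure `G*`: `j → i` with `i ≠ j` reachable from `j`. -/
def EStar {n : ℕ} (E : Fin n → Fin n → Prop) (j i : Fin n) : Prop :=
  j ≠ i ∧ ∃ p, IsPathFrom E j i p

section Paths
variable {n : ℕ} {E : Fin n → Fin n → Prop}

lemma isPathFrom_iff {a b : Fin n} {p : List (Fin n)} :
    IsPathFrom E a b p ↔ p.head? = some a ∧ p.getLast? = some b ∧ p.IsChain E := Iff.rfl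

lemma isPathFrom_singleton_iff {a b : Fin n} : IsPathFrom E a b [a] ↔ b = a := by
  simp [isPathFrom_iff, eq_comm]

lemma isPathFrom_cons_cons_iff {a b c : Fin n} {t : List (Fin n)} :
    IsPathFrom E a c (a :: b :: t) ↔ E a b ∧ IsPathFrom E b c (b :: t) := by
  simp [isPathFrom_iff, List.isChain_cons_cons, List.getLast?_cons_cons, and_left_comm]

lemma isPathFrom_pair {a b : Fin n} (h : E a b) : IsPathFrom E a b [a, b] :=
  isPathFrom_cons_cons_iff.2 ⟨h, isPathFrom_singleton_iff.2 rfl⟩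

lemma IsPathFrom.exists_eq_cons {a b : Fin n} {p : List (Fin n)} (h : IsPathFrom E a b p) :
    ∃ t, p = a :: t := by
  cases p with
  | nil => simp [isPathFrom_iff] at h
  | cons c t => exact ⟨t, by simpa [isPathFrom_iff] using h.1⟩

lemma IsPathFrom.append {a b c : Fin n} {p t : List (Fin n)} (hp : IsPathFrom E a b p)
    (hq : IsPathFrom E b c (b :: t)) : IsPathFrom E a c (p ++ t) := by
  obtain ⟨p, rfl⟩ := hp.exists_eq_cons
  induction p generalizing a with
  | nil =>
    obtain rfl := isPathFrom_singleton_iff.1 hp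
    exact hq
  | cons d p ih =>
    rw [isPathFrom_cons_cons_iff] at hp
    exact isPathFrom_cons_cons_iff.2 ⟨hp.1, ih hp.2⟩

lemma IsDAG.irrefl (hdag : IsDAG E) (a : Fin n) : ¬ E a a := fun h => by
  simpa using hdag a _ (isPathFrom_pair h)

lemma IsDAG.nodup (hdag : IsDAG E) {p : List (Fin n)} (hp : p.IsChain E) : p.Nodup := by
  induction p with
  | nil => exact List.nodup_nil
  | cons x t ih =>
    refine List.nodup_cons.2 ⟨fun hx => ?_, ih hp.tail⟩
    obtain ⟨s, u, rfl⟩ := List.append_of_mem hx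
    have hcycle : IsPathFrom E x x (x :: s ++ [x]) :=
      ⟨rfl, List.getLast?_concat (l := x :: s), hp.prefix ⟨u, by simp⟩⟩
    simpa using hdag x _ hcycle

lemma IsDAG.length_le (hdag : IsDAG E) {a b : Fin n} {p : List (Fin n)}
    (hp : IsPathFrom E a b p) : p.length ≤ n := by
  simpa using (hdag.nodup (isPathFrom_iff.1 hp).2.2).length_le_card

end Paths

section PathWeight
variable {n : ℕ} (w : Fin n → Fin n → ℝ)

@[simp] lemma pathWeight_singleton (a : Fin n) : pathWeight w [a] = 0 := by
  simp [pathWeight]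

lemma pathWeight_cons_cons (a b : Fin n) (t : List (Fin n)) :
    pathWeight w (a :: b :: t) = w a b + pathWeight w (b :: t) := by
  simp [pathWeight]

lemma IsPathFrom.pathWeight_append {E : Fin n → Fin n → Prop} {a b : Fin n}
    {p : List (Fin n)} (hp : IsPathFrom E a b p) (t : List (Fin n)) :
    pathWeight w (p ++ t) = pathWeight w p + pathWeight w (b :: t) := by
  obtain ⟨p, rfl⟩ := hp.exists_eq_cons
  induction p generalizing a with
  | nil => simp [← isPathFrom_singleton_iff.1 hp]
  | cons d p ih =>
    rw [isPathFrom_cons_cons_iff] at hp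
    simp only [List.cons_append, pathWeight_cons_cons] at ih ⊢
    rw [ih hp.2, add_assoc]

end PathWeight

section Kleene
variable {n : ℕ} {E : Fin n → Fin n → Prop} {C : Matrix (Fin n) (Fin n) Trop}

lemma SupportedOn.coe_cw (hsupp : SupportedOn C E) {a b : Fin n} (h : E b a) :
    (cw C b a : Trop) = C a b := by
  have hne : C a b ≠ ⊤ := by
    by_cases hab : a = b
    · simp [hab, hsupp.1]
    · exact (hsupp.2 a b hab).2 h
  obtain ⟨r, hr⟩ := WithTop.ne_top_iff_exists.1 hne
  simp [cw, ← hr]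

lemma mpPow_length_le_pathWeight (hsupp : SupportedOn C E) {a b : Fin n} {t : List (Fin n)}
    (hp : IsPathFrom E b a (b :: t)) :
    mpPow C t.length a b ≤ pathWeight (cw C) (b :: t) := by
  induction t generalizing b with
  | nil =>
    obtain rfl := isPathFrom_singleton_iff.1 hp
    simp [mpPow, mpId]
  | cons m t ih =>
    obtain ⟨hbm, hp⟩ := isPathFrom_cons_cons_iff.1 hp
    calc mpPow C (t.length + 1) a b ≤ mpPow C t.length a m + C m b :=
          Finset.inf_le (Finset.mem_univ m)
      _ ≤ pathWeight (cw C) (m :: t) + cw C b m := by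
          rw [hsupp.coe_cw hbm]; exact add_le_add_left (ih hp) _
      _ = pathWeight (cw C) (b :: m :: t) := by
          rw [pathWeight_cons_cons, add_comm]; norm_cast

lemma kleene_le_pathWeight (hsupp : SupportedOn C E) (hdag : IsDAG E) {a b : Fin n}
    {p : List (Fin n)} (hp : IsPathFrom E b a p) :
    kleene C a b ≤ pathWeight (cw C) p := by
  obtain ⟨t, rfl⟩ := hp.exists_eq_cons
  have ht : t.length < n := by simpa using hdag.length_le hp
  exact (Finset.inf_le (Finset.mem_range.2 ht)).trans (mpPow_length_le_pathWeight hsupp hp)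

lemma kleene_le_of_adj (hsupp : SupportedOn C E) (hdag : IsDAG E) {a b : Fin n} (h : E b a) :
    kleene C a b ≤ C a b := by
  simpa [pathWeight_cons_cons, hsupp.coe_cw h] using
    kleene_le_pathWeight hsupp hdag (isPathFrom_pair h)

lemma exists_path_of_mpPow_ne_top (hsupp : SupportedOn C E) (k : ℕ) {a b : Fin n}
    (h : mpPow C k a b ≠ ⊤) :
    ∃ p, IsPathFrom E b a p ∧ (pathWeight (cw C) p : Trop) ≤ mpPow C k a b := by
  induction k generalizing b with
  | zero =>
    obtain rfl : a = b := by by_contra hab; simp [mpPow, mpId, hab] at h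
    exact ⟨[a], isPathFrom_singleton_iff.2 rfl, by simp [mpPow, mpId]⟩
  | succ k ih =>
    obtain ⟨m, -, hm⟩ := Finset.exists_mem_eq_inf Finset.univ ⟨b, Finset.mem_univ b⟩
      fun m => mpPow C k a m + C m b
    change mpPow C (k + 1) a b = mpPow C k a m + C m b at hm
    rw [hm] at h ⊢
    obtain ⟨q, hq, hqw⟩ := ih (b := m) fun e => h (by simp [e])
    by_cases hmb : m = b
    · subst hmb
      exact ⟨q, hq, by simpa [hsupp.1 m] using hqw⟩
    have hbm : E b m := (hsupp.2 m b hmb).1 fun e => h (by simp [e])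
    obtain ⟨t, rfl⟩ := hq.exists_eq_cons
    refine ⟨b :: m :: t, isPathFrom_cons_cons_iff.2 ⟨hbm, hq⟩, ?_⟩
    rw [pathWeight_cons_cons, WithTop.coe_add, hsupp.coe_cw hbm, add_comm]
    exact add_le_add_left hqw _

lemma exists_path_of_kleene_ne_top (hsupp : SupportedOn C E) {a b : Fin n}
    (h : kleene C a b ≠ ⊤) :
    ∃ p, IsPathFrom E b a p ∧ (pathWeight (cw C) p : Trop) ≤ kleene C a b := by
  obtain ⟨k, -, hk⟩ := Finset.exists_mem_eq_inf (Finset.range n)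
    ⟨0, Finset.mem_range.2 a.pos⟩ fun k => mpPow C k a b
  change kleene C a b = mpPow C k a b at hk
  rw [hk] at h ⊢
  exact exists_path_of_mpPow_ne_top hsupp k h

lemma eStar_of_kleene_ne_top (hsupp : SupportedOn C E) {a b : Fin n} (hab : a ≠ b)
    (h : kleene C a b ≠ ⊤) : EStar E b a :=
  ⟨Ne.symm hab, (exists_path_of_kleene_ne_top hsupp h).imp fun _ hp => hp.1⟩

lemma kleene_diag (hsupp : SupportedOn C E) (hdag : IsDAG E) (a : Fin n) :
    kleene C a a = 0 := by
  have hle : kleene C a a ≤ 0 :=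
    calc kleene C a a ≤ mpPow C 0 a a := Finset.inf_le (Finset.mem_range.2 a.pos)
      _ = 0 := by simp [mpPow, mpId]
  obtain ⟨p, hp, hpw⟩ := exists_path_of_kleene_ne_top hsupp (hle.trans_lt (by simp)).ne
  obtain ⟨t, rfl⟩ := hp.exists_eq_cons
  obtain rfl : t = [] := List.length_eq_zero_iff.1 (by simpa using hdag a _ hp)
  exact hle.antisymm (by simpa using hpw)

lemma kleene_triangle (hsupp : SupportedOn C E) (hdag : IsDAG E) (a b c : Fin n) :
    kleene C a c ≤ kleene C a b + kleene C b c := by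
  by_cases hab : kleene C a b = ⊤
  · simp [hab]
  by_cases hbc : kleene C b c = ⊤
  · simp [hbc]
  obtain ⟨p, hp, hpw⟩ := exists_path_of_kleene_ne_top hsupp hbc
  obtain ⟨q, hq, hqw⟩ := exists_path_of_kleene_ne_top hsupp hab
  obtain ⟨t, rfl⟩ := hq.exists_eq_cons
  calc kleene C a c ≤ pathWeight (cw C) (p ++ t) := kleene_le_pathWeight hsupp hdag (hp.append hq)
    _ = (pathWeight (cw C) (b :: t) : Trop) + pathWeight (cw C) p := by
        rw [hp.pathWeight_append, add_comm]; norm_cast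
    _ ≤ kleene C a b + kleene C b c := add_le_add hqw hpw

end Kleene

section Reduction
variable {n : ℕ} {E : Fin n → Fin n → Prop} {C : Matrix (Fin n) (Fin n) Trop} {i j : Fin n}

lemma inWTR_iff_forall_lt_kleene_add (hsupp : SupportedOn C E) (hdag : IsDAG E) (hji : E j i) :
    InWTR E (cw C) j i ↔ ∀ u, u ≠ i → u ≠ j → C i j < kleene C i u + kleene C u j := by
  rw [← hsupp.coe_cw hji]
  constructor
  · rintro ⟨-, hmin⟩ u hui huj
    by_contra! hle
    have hiu : kleene C i u ≠ ⊤ := fun h => by simp [h] at hle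
    have huj' : kleene C u j ≠ ⊤ := fun h => by simp [h] at hle
    obtain ⟨p, hp, hpw⟩ := exists_path_of_kleene_ne_top hsupp huj'
    obtain ⟨q, hq, hqw⟩ := exists_path_of_kleene_ne_top hsupp hiu
    obtain ⟨t, rfl⟩ := hq.exists_eq_cons
    have hne : p ++ t ≠ [j, i] := fun h => by
      have hu : u ∈ p ++ t :=
        List.mem_append_left t (List.mem_of_getLast? (isPathFrom_iff.1 hp).2.1)
      simp [h, hui, huj] at hu
    have hlt := hmin _ (hp.append hq) hne
    rw [hp.pathWeight_append] at hlt
    have hge : ((pathWeight (cw C) p + pathWeight (cw C) (u :: t) : ℝ) : Trop) ≤ cw C j i :=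
      calc ((pathWeight (cw C) p + pathWeight (cw C) (u :: t) : ℝ) : Trop)
          ≤ kleene C u j + kleene C i u := by rw [WithTop.coe_add]; exact add_le_add hpw hqw
        _ ≤ cw C j i := by rwa [add_comm]
    exact (WithTop.coe_le_coe.1 hge).not_gt hlt
  · intro h
    refine ⟨hji, fun p hp hne => ?_⟩
    obtain ⟨_ | ⟨u, t⟩, rfl⟩ := hp.exists_eq_cons
    · obtain rfl := isPathFrom_singleton_iff.1 hp
      exact (hdag.irrefl _ hji).elim
    obtain ⟨hju, hp⟩ := isPathFrom_cons_cons_iff.1 hp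
    have huj : u ≠ j := fun e => hdag.irrefl j (e ▸ hju)
    have hui : u ≠ i := by
      rintro rfl
      obtain rfl : t = [] := List.length_eq_zero_iff.1 (by simpa using hdag u _ hp)
      exact hne rfl
    have hle : kleene C i u + kleene C u j ≤
        ((pathWeight (cw C) (u :: t) + cw C j u : ℝ) : Trop) := by
      rw [WithTop.coe_add, hsupp.coe_cw hju]
      exact add_le_add (kleene_le_pathWeight hsupp hdag hp) (kleene_le_of_adj hsupp hdag hju)
    have hlt := WithTop.coe_lt_coe.1 ((h u hui huj).trans_le hle)
    rw [pathWeight_cons_cons]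
    linarith

end Reduction

section Potential
variable {n : ℕ} (K : Matrix (Fin n) (Fin n) Trop)

lemma coe_sub_le_iff {p q : ℝ} {t : Trop} :
    ((p - q : ℝ) : Trop) ≤ t ↔ (p : Trop) ≤ t + q := by
  induction t using WithTop.recTopCoe with
  | top => simp
  | coe t =>
    norm_cast
    constructor <;> intro <;> linarith

lemma coe_sub_eq_add (p q r : ℝ) :
    ((p - q : ℝ) : Trop) = ((p - r : ℝ) : Trop) + ((r - q : ℝ) : Trop) := by
  rw [← WithTop.coe_add, sub_add_sub_cancel]

lemma exists_forall_lt_add (c : ℝ) :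
    ∃ M : ℝ, ∀ a b, (c : Trop) < M + K a b ∧ 0 ≤ (M : Trop) + K a b := by
  have hev : ∀ a b, ∀ᶠ M : ℝ in Filter.atTop,
      (c : Trop) < M + K a b ∧ 0 ≤ (M : Trop) + K a b := by
    intro a b
    induction K a b using WithTop.recTopCoe with
    | top => simp
    | coe r =>
      filter_upwards [Filter.eventually_gt_atTop (c - r), Filter.eventually_ge_atTop (-r)]
        with M h1 h2
      norm_cast
      constructor <;> linarith
  exact (Filter.eventually_all.2 fun a => Filter.eventually_all.2 (hev a)).exists

def detourMatrix (i j : Fin n) : Matrix (Fin n) (Fin n) Trop := fun a b =>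
  if a = i ∧ b = j then
    (Finset.univ.filter fun u => u ≠ i ∧ u ≠ j).inf fun u => K i u + K u j
  else K a b

variable {K}

lemma detourMatrix_apply_of_not {i j a b : Fin n} (h : ¬(a = i ∧ b = j)) :
    detourMatrix K i j a b = K a b := if_neg h

lemma le_detourMatrix (htri : ∀ a b c, K a c ≤ K a b + K b c) (i j a b : Fin n) :
    K a b ≤ detourMatrix K i j a b := by
  unfold detourMatrix
  split_ifs with h
  · obtain ⟨rfl, rfl⟩ := h
    exact Finset.le_inf fun u _ => htri a u b
  · exact le_rfl

lemma detourMatrix_le_add (hK0 : ∀ a, K a a = 0) (htri : ∀ a b c, K a c ≤ K a b + K b c)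
    {i j a b : Fin n} (hab : ¬(a = i ∧ b = j)) (u : Fin n) :
    detourMatrix K i j a u ≤ K a b + detourMatrix K i j b u := by
  by_cases hau : a = i ∧ u = j
  · obtain ⟨rfl, rfl⟩ := hau
    have hbu : b ≠ u := fun h => hab ⟨rfl, h⟩
    by_cases hba : b = a
    · simp [hba, hK0]
    rw [detourMatrix_apply_of_not (fun h => hba h.1)]
    simp only [detourMatrix, and_self, if_true]
    exact Finset.inf_le (by simp [hba, hbu])
  · rw [detourMatrix_apply_of_not hau]
    exact (htri a b u).trans (add_le_add_right (le_detourMatrix htri i j b u) _)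

def tropMulVec (A : Matrix (Fin n) (Fin n) Trop) (lam : Fin n → ℝ) : Fin n → Trop :=
  fun a => Finset.univ.inf fun u => A a u + lam u

lemma tropMulVec_le {A : Matrix (Fin n) (Fin n) Trop} (lam : Fin n → ℝ) {a : Fin n}
    (ha : A a a = 0) : tropMulVec A lam a ≤ lam a := by
  calc tropMulVec A lam a ≤ A a a + lam a := Finset.inf_le (Finset.mem_univ a)
    _ = lam a := by rw [ha, zero_add]

lemma tropMulVec_le_add {A : Matrix (Fin n) (Fin n) Trop} (lam : Fin n → ℝ) {a b : Fin n}
    (h : ∀ u, A a u ≤ K a b + A b u) : tropMulVec A lam a ≤ K a b + tropMulVec A lam b := by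
  obtain ⟨u, -, hu⟩ := Finset.exists_mem_eq_inf Finset.univ ⟨b, Finset.mem_univ b⟩
    fun u => A b u + lam u
  calc tropMulVec A lam a ≤ A a u + lam u := Finset.inf_le (Finset.mem_univ u)
    _ ≤ K a b + A b u + lam u := add_le_add_left (h u) _
    _ = K a b + tropMulVec A lam b := by rw [add_assoc, tropMulVec, hu]

lemma exists_potential_of_forall_lt_add (hK0 : ∀ a, K a a = 0)
    (htri : ∀ a b c, K a c ≤ K a b + K b c) {i j : Fin n} (hij : i ≠ j) {c : ℝ}
    (hc : ∀ u, u ≠ i → u ≠ j → (c : Trop) < K i u + K u j) :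
    ∃ x : Fin n → ℝ,
      (∀ a b, ¬(a = i ∧ b = j) → ((x a - x b : ℝ) : Trop) ≤ K a b) ∧ c < x i - x j := by
  obtain ⟨M, hM⟩ := exists_forall_lt_add K c
  set lam : Fin n → ℝ := fun u => if u = j then 0 else M
  set y := tropMulVec (detourMatrix K i j) lam
  have hdiag : ∀ a, detourMatrix K i j a a = 0 := fun a => by
    rw [detourMatrix_apply_of_not fun h => hij (h.1.symm.trans h.2), hK0]
  have hy : ∀ a, y a ≠ ⊤ := fun a => ((tropMulVec_le _ (hdiag a)).trans_lt (by simp)).ne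
  have hyj : y j = 0 := by
    have hle : y j ≤ 0 := by simpa [lam] using tropMulVec_le lam (hdiag j)
    refine hle.antisymm (Finset.le_inf fun u _ => ?_)
    by_cases hu : u = j
    · simp [hu, lam, hdiag]
    · simpa [hu, lam, detourMatrix_apply_of_not (fun h : j = i ∧ u = j => hij h.1.symm),
        add_comm] using (hM j u).2
  have hyi : (c : Trop) < y i := by
    refine (Finset.lt_inf_iff (WithTop.coe_lt_top c)).2 fun u _ => ?_
    by_cases hu : u = j
    · simpa [hu, lam, detourMatrix, Finset.lt_inf_iff] using hc
    · simpa [hu, lam, detourMatrix_apply_of_not (fun h : i = i ∧ u = j => hu h.2), add_comm]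
        using (hM i u).1
  refine ⟨fun a => (y a).untop (hy a), fun a b hab => ?_, ?_⟩
  · rw [coe_sub_le_iff, WithTop.coe_untop, WithTop.coe_untop]
    exact tropMulVec_le_add _ (detourMatrix_le_add hK0 htri hab)
  · have hj : (y j).untop (hy j) = 0 := by simp [hyj]
    simp only [hj, sub_zero]
    rw [← WithTop.coe_lt_coe, WithTop.coe_untop]
    exact hyi

end Potential

section Polyhedron
variable {n : ℕ} {E : Fin n → Fin n → Prop} {C : Matrix (Fin n) (Fin n) Trop} {i j : Fin n}

def wdpExcept (E : Fin n → Fin n → Prop) (C : Matrix (Fin n) (Fin n) Trop) (i j : Fin n) :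
    Set (Fin n → ℝ) :=
  {x | ∀ a b : Fin n, EStar E b a → ¬(a = i ∧ b = j) →
    ((x a - x b : ℝ) : Trop) ≤ kleene C a b}

lemma coe_sub_le_mpPow (hC : ∀ b, 0 ≤ C b b) {x : Fin n → ℝ} (hx : x ∈ wdp C) (k : ℕ)
    (a b : Fin n) : ((x a - x b : ℝ) : Trop) ≤ mpPow C k a b := by
  induction k generalizing b with
  | zero => by_cases hab : a = b <;> simp [mpPow, mpId, hab]
  | succ k ih =>
    show _ ≤ Finset.univ.inf fun m => mpPow C k a m + C m b
    refine Finset.le_inf fun m _ => ?_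
    have hmb : ((x m - x b : ℝ) : Trop) ≤ C m b := by
      by_cases h : m = b
      · simpa [h] using hC b
      · exact hx m b h
    rw [coe_sub_eq_add _ _ (x m)]
    exact add_le_add (ih m) hmb

lemma wdp_subset_wdpExcept (hC : ∀ b, 0 ≤ C b b) : wdp C ⊆ wdpExcept E C i j :=
  fun _ hx a b _ _ => Finset.le_inf fun k _ => coe_sub_le_mpPow hC hx k a b

lemma wdpExcept_subset_wdp (hsupp : SupportedOn C E) (hdag : IsDAG E)
    (hw : ¬ InWTR E (cw C) j i) : wdpExcept E C i j ⊆ wdp C := by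
  intro x hx a b hab
  have hK : ∀ a b, a ≠ b → ¬(a = i ∧ b = j) → kleene C a b ≠ ⊤ →
      ((x a - x b : ℝ) : Trop) ≤ kleene C a b :=
    fun a b hab hij hfin => hx a b (eStar_of_kleene_ne_top hsupp hab hfin) hij
  by_cases hCab : C a b = ⊤
  · simp [hCab]
  have hba : E b a := (hsupp.2 a b hab).1 hCab
  by_cases hij : a = i ∧ b = j
  · obtain ⟨rfl, rfl⟩ := hij
    obtain ⟨u, hua, hub, hle⟩ :
        ∃ u, u ≠ a ∧ u ≠ b ∧ kleene C a u + kleene C u b ≤ C a b := by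
      simpa [inWTR_iff_forall_lt_kleene_add hsupp hdag hba] using hw
    have hau : kleene C a u ≠ ⊤ := fun h => hCab (by simpa [h] using hle)
    have hub' : kleene C u b ≠ ⊤ := fun h => hCab (by simpa [h] using hle)
    rw [coe_sub_eq_add _ _ (x u)]
    exact (add_le_add (hK a u (Ne.symm hua) (fun h => hub h.2) hau)
      (hK u b hub (fun h => hua h.1) hub')).trans hle
  · have hKab := kleene_le_of_adj hsupp hdag hba
    exact (hK a b hab hij (ne_top_of_le_ne_top hCab hKab)).trans hKab

lemma exists_mem_wdpExcept_notMem_wdp (hsupp : SupportedOn C E) (hdag : IsDAG E)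
    (hw : InWTR E (cw C) j i) : ∃ x ∈ wdpExcept E C i j, x ∉ wdp C := by
  have hij : i ≠ j := fun h => hdag.irrefl j (h ▸ hw.1)
  obtain ⟨x, hx, hxij⟩ := exists_potential_of_forall_lt_add (kleene_diag hsupp hdag)
    (kleene_triangle hsupp hdag) hij (c := cw C j i)
    (by rw [hsupp.coe_cw hw.1]; exact (inWTR_iff_forall_lt_kleene_add hsupp hdag hw.1).1 hw)
  refine ⟨x, fun a b _ hab => hx a b hab, fun hmem => ?_⟩
  have hle := hmem i j hij
  rw [← hsupp.coe_cw hw.1, WithTop.coe_le_coe] at hle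
  linarith

end Polyhedron

theorem stmt19_general {n : ℕ} (E : Fin n → Fin n → Prop) (C : Matrix (Fin n) (Fin n) Trop)
    (hdag : IsDAG E) (hsupp : SupportedOn C E) (i j : Fin n) :
    wdp C ⊂ {x : Fin n → ℝ | ∀ a b : Fin n, EStar E b a → ¬(a = i ∧ b = j) →
        ((x a - x b : ℝ) : Trop) ≤ kleene C a b}
      ↔ InWTR E (cw C) j i := by
  change wdp C ⊂ wdpExcept E C i j ↔ _
  rw [Set.ssubset_iff_of_subset (wdp_subset_wdpExcept fun b => (hsupp.1 b).ge)]
  constructor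
  · rintro ⟨x, hx, hxQ⟩
    by_contra hw
    exact hxQ (wdpExcept_subset_wdp hsupp hdag hw hx)
  · exact exists_mem_wdpExcept_notMem_wdp hsupp hdag

/-- For a weighted DAG `(G, w)` with weight matrix `C` and an edge
`j → i` of the transitive closure `G*`, the inequality `x_i − x_j ≤ c*_ij` is
non-redundant — the polyhedron cut out by all the other inequalities `x_k − x_l ≤ c*_kl`
(for edges `l → k` of `G*`) strictly contains `Q(C)` — iff `j → i ∈ G^♭_w`. -/
theorem stmt19 {n : ℕ} (E : Fin n → Fin n → Prop) (C : Matrix (Fin n) (Fin n) Trop)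
    (hdag : IsDAG E) (hsupp : SupportedOn C E) (i j : Fin n) (he : EStar E j i) :
    wdp C ⊂ {x : Fin n → ℝ | ∀ a b : Fin n, EStar E b a → ¬(a = i ∧ b = j) →
        ((x a - x b : ℝ) : Trop) ≤ kleene C a b}
      ↔ InWTR E (cw C) j i :=
  stmt19_general E C hdag hsupp i j
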